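/- Let G be a group and let S be an epsilon-strongly G-graded ring. For each g ∈ G let ε_g ∈ S_g S_{g⁻¹} be an element satisfying ε_g s = s ε_{g⁻¹} = s for all s ∈ S_g. Then for every g ∈ G: (1) ε_g is a two-sided multiplicative identity of the ring S_g S_{g⁻¹}; (2) ε_g commutes with every element of S_e; and (3) S_e is a unital ring with multiplicative identity ε_e. -/

import Mathlib

/-
Every element of `S_g S_{g⁻¹}` is a sum of products `a b` with `a ∈ S_g`, `b ∈ S_{g⁻¹}`, and
`ε_g a = a`, `b ε_g = b`; so `ε_g` is an identity of `S_g S_{g⁻¹}`. This ring is an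
`S_e`-bimodule, hence for `x ∈ S_e` both `ε_g x` and `x ε_g` lie in it, and
`ε_g x = (ε_g x) ε_g = ε_g (x ε_g) = x ε_g`. For `g = e`, `S_e S_e ⊆ S_e` gives the last part.
-/

/-- The product `AB` of two additive subgroups of a (possibly non-unital) ring:
the additive subgroup generated by all products `ab` with `a ∈ A`, `b ∈ B`. -/
def sgMul {S : Type*} [NonUnitalRing S] (A B : AddSubgroup S) : AddSubgroup S :=
  AddSubgroup.closure {x | ∃ a ∈ A, ∃ b ∈ B, x = a * b}

section
variable {G : Type*} [Group G] {S : Type*} [NonUnitalRing S]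

/-- A `G`-graded ring `S = ⊕_{g ∈ G} S_g` is *epsilon-strongly `G`-graded* if for every
`g ∈ G` there are `ε ∈ S_g S_{g⁻¹}` and `ε' ∈ S_{g⁻¹} S_g` with `ε s = s` and `s ε' = s`
for all `s ∈ S_g`. -/
def IsEpsilonStronglyGraded (𝒜 : G → AddSubgroup S) : Prop :=
  ∀ g : G, ∃ ε ∈ sgMul (𝒜 g) (𝒜 g⁻¹), ∃ ε' ∈ sgMul (𝒜 g⁻¹) (𝒜 g),
    ∀ s ∈ 𝒜 g, ε * s = s ∧ s * ε' = s

/-- `S` is *symmetrically `G`-graded* if `S_g S_{g⁻¹} S_g = S_g` for all `g ∈ G`. -/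
def IsSymmetricallyGraded (𝒜 : G → AddSubgroup S) : Prop :=
  ∀ g : G, sgMul (sgMul (𝒜 g) (𝒜 g⁻¹)) (𝒜 g) = 𝒜 g

/-- `S` is *nearly epsilon-strongly `G`-graded* if for every `g ∈ G` and `s ∈ S_g` one has
`s ∈ (S_g S_{g⁻¹}) s` and `s ∈ s (S_{g⁻¹} S_g)`. -/
def IsNearlyEpsilonStronglyGraded (𝒜 : G → AddSubgroup S) : Prop :=
  ∀ g : G, ∀ s ∈ 𝒜 g,
    (∃ t ∈ sgMul (𝒜 g) (𝒜 g⁻¹), t * s = s) ∧ (∃ t ∈ sgMul (𝒜 g⁻¹) (𝒜 g), s * t = s)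

/-- An additive subgroup of a ring is a *unital* ring if it contains a two-sided
multiplicative identity for itself. -/
def IsUnitalSubgroup (A : AddSubgroup S) : Prop :=
  ∃ u ∈ A, ∀ a ∈ A, u * a = a ∧ a * u = a

/-- An additive subgroup of a ring is an *s-unital* ring if `t ∈ At` and `t ∈ tA`
for every `t ∈ A`. -/
def IsSUnitalSubgroup (A : AddSubgroup S) : Prop :=
  ∀ t ∈ A, (∃ a ∈ A, a * t = t) ∧ (∃ b ∈ A, t * b = t)

end

section sgMul

variable {S : Type*} [NonUnitalRing S] {A B C : AddSubgroup S}

theorem mul_mem_sgMul {a b : S} (ha : a ∈ A) (hb : b ∈ B) : a * b ∈ sgMul A B :=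
  AddSubgroup.subset_closure ⟨a, ha, b, hb, rfl⟩

theorem sgMul_le (h : ∀ a ∈ A, ∀ b ∈ B, a * b ∈ C) : sgMul A B ≤ C :=
  (AddSubgroup.closure_le C).mpr <| by
    rintro _ ⟨a, ha, b, hb, rfl⟩
    exact h a ha b hb

theorem mul_left_eq_self_of_mem_sgMul {u x : S} (hu : ∀ a ∈ A, u * a = a) (hx : x ∈ sgMul A B) :
    u * x = x := by
  have : sgMul A B ≤ (AddMonoidHom.mulLeft u).eqLocus (AddMonoidHom.id S) :=
    sgMul_le fun a ha b _ => show u * (a * b) = a * b by rw [← mul_assoc, hu a ha]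
  exact this hx

theorem mul_right_eq_self_of_mem_sgMul {u x : S} (hu : ∀ b ∈ B, b * u = b) (hx : x ∈ sgMul A B) :
    x * u = x := by
  have : sgMul A B ≤ (AddMonoidHom.mulRight u).eqLocus (AddMonoidHom.id S) :=
    sgMul_le fun a _ b hb => show a * b * u = a * b by rw [mul_assoc, hu b hb]
  exact this hx

theorem mul_mem_sgMul_of_mul_mem_right {x y : S} (hB : ∀ b ∈ B, b * y ∈ B)
    (hx : x ∈ sgMul A B) : x * y ∈ sgMul A B := by
  have : sgMul A B ≤ (sgMul A B).comap (AddMonoidHom.mulRight y) :=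
    sgMul_le fun a ha b hb => by simpa [mul_assoc] using mul_mem_sgMul ha (hB b hb)
  exact this hx

theorem mul_mem_sgMul_of_mul_mem_left {x y : S} (hA : ∀ a ∈ A, y * a ∈ A)
    (hx : x ∈ sgMul A B) : y * x ∈ sgMul A B := by
  have : sgMul A B ≤ (sgMul A B).comap (AddMonoidHom.mulLeft y) :=
    sgMul_le fun a ha b hb => by simpa [mul_assoc] using mul_mem_sgMul (hA a ha) hb
  exact this hx

end sgMul

theorem mul_comm_of_identity_of_mul_mem {S : Type*} [Semigroup S] {I : Set S} {e x : S}
    (hl : ∀ y ∈ I, e * y = y) (hr : ∀ y ∈ I, y * e = y) (hex : e * x ∈ I) (hxe : x * e ∈ I) :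
    e * x = x * e :=
  calc e * x = e * x * e := (hr _ hex).symm
    _ = e * (x * e) := mul_assoc _ _ _
    _ = x * e := hl _ hxe

theorem eps_identity_central_and_unital_component_general
    {G : Type*} [Group G] {S : Type*} [NonUnitalRing S]
    (𝒜 : G → AddSubgroup S)
    (hmul : ∀ (g h : G), ∀ a ∈ 𝒜 g, ∀ b ∈ 𝒜 h, a * b ∈ 𝒜 (g * h))
    (ε : G → S)
    (hmem : ∀ g : G, ε g ∈ sgMul (𝒜 g) (𝒜 g⁻¹))
    (hid : ∀ g : G, ∀ s ∈ 𝒜 g, ε g * s = s ∧ s * ε g⁻¹ = s)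
    (g : G) :
    (∀ x ∈ sgMul (𝒜 g) (𝒜 g⁻¹), ε g * x = x ∧ x * ε g = x) ∧
    (∀ x ∈ 𝒜 (1 : G), ε g * x = x * ε g) ∧
    (ε 1 ∈ 𝒜 (1 : G) ∧ ∀ x ∈ 𝒜 (1 : G), ε 1 * x = x ∧ x * ε 1 = x) := by
  have hleft (x) (hx : x ∈ sgMul (𝒜 g) (𝒜 g⁻¹)) : ε g * x = x :=
    mul_left_eq_self_of_mem_sgMul (fun a ha => (hid g a ha).1) hx
  have hright (x) (hx : x ∈ sgMul (𝒜 g) (𝒜 g⁻¹)) : x * ε g = x :=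
    mul_right_eq_self_of_mem_sgMul (fun b hb => by simpa using (hid g⁻¹ b hb).2) hx
  refine ⟨fun x hx => ⟨hleft x hx, hright x hx⟩, fun x hx => ?_, ?_, fun x hx => ?_⟩
  · refine mul_comm_of_identity_of_mul_mem hleft hright ?_ ?_
    · exact mul_mem_sgMul_of_mul_mem_right (fun b hb => by simpa using hmul _ 1 b hb x hx)
        (hmem g)
    · exact mul_mem_sgMul_of_mul_mem_left (fun a ha => by simpa using hmul 1 _ x hx a ha)
        (hmem g)
  · exact sgMul_le (fun a ha b hb => by simpa using hmul 1 1⁻¹ a ha b hb) (hmem 1)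
  · simpa using hid 1 x hx

/-- Let `S` be epsilon-strongly `G`-graded and for each `g ∈ G` let
`ε_g ∈ S_g S_{g⁻¹}` satisfy `ε_g s = s ε_{g⁻¹} = s` for all `s ∈ S_g`. Then for every
`g ∈ G`: (1) `ε_g` is a two-sided multiplicative identity of the ring `S_g S_{g⁻¹}`;
(2) `ε_g` commutes with every element of `S_e`; and (3) `S_e` is a unital ring with
multiplicative identity `ε_e`. -/
theorem eps_identity_central_and_unital_component
    {G : Type*} [Group G] [DecidableEq G] {S : Type*} [NonUnitalRing S]
    (𝒜 : G → AddSubgroup S)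
    (hmul : ∀ (g h : G), ∀ a ∈ 𝒜 g, ∀ b ∈ 𝒜 h, a * b ∈ 𝒜 (g * h))
    (hdecomp : DirectSum.IsInternal 𝒜)
    (ε : G → S)
    (hmem : ∀ g : G, ε g ∈ sgMul (𝒜 g) (𝒜 g⁻¹))
    (hid : ∀ g : G, ∀ s ∈ 𝒜 g, ε g * s = s ∧ s * ε g⁻¹ = s)
    (g : G) :
    (∀ x ∈ sgMul (𝒜 g) (𝒜 g⁻¹), ε g * x = x ∧ x * ε g = x) ∧
    (∀ x ∈ 𝒜 (1 : G), ε g * x = x * ε g) ∧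
    (ε 1 ∈ 𝒜 (1 : G) ∧ ∀ x ∈ 𝒜 (1 : G), ε 1 * x = x ∧ x * ε 1 = x) :=
  eps_identity_central_and_unital_component_general 𝒜 hmul ε hmem hid g
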